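/- arXiv:math/9507212 — 3 statements merged into one kernel-verified Lean document; each statement's English description precedes it below -/
import Mathlib

section
/- For every nonempty set Γ of countable graphs each containing an infinite path, and every infinite cardinal λ, the weak complexity of Forb(Γ) restricted to graphs of cardinality λ is at least λ⁺: for any family ℱ of at most λ graphs (each omitting all members of Γ as subgraphs and of cardinality λ), there is a graph H of cardinality λ omitting all members of Γ that is not isomorphic to a subgraph of any member of ℱ. -/
/-- `G` has a (not necessarily induced) subgraph isomorphic to `H`. -/
def HasSubgraphCopy {V W : Type*} (G : SimpleGraph V) (H : SimpleGraph W) : Prop :=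
  ∃ f : W → V, Function.Injective f ∧ ∀ a b, H.Adj a b → G.Adj (f a) (f b)

/-- `G` contains a one-way infinite path. -/
def HasRay {V : Type*} (G : SimpleGraph V) : Prop :=
  ∃ f : ℕ → V, Function.Injective f ∧ ∀ n, G.Adj (f n) (f (n + 1))

/-- `G` has no subgraph isomorphic to a member of `Γ`. -/
def OmitsAll {V : Type*} (G : SimpleGraph V) (Γ : Set (SimpleGraph ℕ)) : Prop :=
  ∀ H ∈ Γ, ¬ HasSubgraphCopy G H

/-!
Fix `H ∈ Γ`. For a graph `G`, the partial copies of `H` in `G` are the injective lists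
`[v₀, …, vₙ₋₁]` that embed `H` restricted to `{0, …, n - 1}`; they form a tree under the
prefix order, in which we keep the edge from a partial copy of length `n` to its prefix of
length `m` only when `m` and `n` are adjacent in `H`. A ray in this tree must climb an
infinite branch, which is a copy of `H` in `G`. An embedding `f` of the tree into `G` also
yields a copy of `H`, built greedily by `vₙ := f [v₀, …, vₙ₋₁]`: the recorded edges of `H`
are exactly what makes `vₘ` and `vₙ` adjacent. So the disjoint union over `i` of the trees
of `F i`, padded with `λ` isolated vertices, has size `λ`, has no ray, hence omits `Γ`, and
embeds into no `F i`.
-/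

open Filter
open scoped SimpleGraph Cardinal

universe u

variable {V W ι : Type*}

lemma hasSubgraphCopy_iff_isContained {G : SimpleGraph V} {H : SimpleGraph W} :
    HasSubgraphCopy G H ↔ H ⊑ G :=
  ⟨fun ⟨f, hf, hadj⟩ => ⟨⟨⟨f, hadj _ _⟩, hf⟩⟩,
    fun ⟨c⟩ => ⟨c, c.injective, fun _ _ h => c.toHom.map_adj h⟩⟩

lemma HasRay.mono {G : SimpleGraph V} {H : SimpleGraph W} (h : HasRay H) (hHG : H ⊑ G) :
    HasRay G := by
  obtain ⟨r, hr, hadj⟩ := h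
  obtain ⟨c⟩ := hHG
  exact ⟨c ∘ r, c.injective.comp hr, fun n => c.toHom.map_adj (hadj n)⟩

lemma HasRay.of_sum_bot {G : SimpleGraph V} (h : HasRay (G ⊕g (⊥ : SimpleGraph W))) :
    HasRay G := by
  obtain ⟨r, hr, hadj⟩ := h
  have hinl : ∀ n, ∃ v, r n = Sum.inl v := fun n => by
    have := hadj n
    rcases hn : r n with v | w
    · exact ⟨v, rfl⟩
    · rcases hn' : r (n + 1) with v' | w' <;> simp [hn, hn'] at this
  choose r' hr' using hinl
  refine ⟨r', fun m n h => hr (by rw [hr', hr', h]), fun n => ?_⟩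
  simpa [hr'] using hadj n

def disjointUnion (G : ι → SimpleGraph V) : SimpleGraph (ι × V) where
  Adj x y := x.1 = y.1 ∧ (G x.1).Adj x.2 y.2
  symm := ⟨fun _ _ ⟨h, hxy⟩ => ⟨h.symm, h ▸ hxy.symm⟩⟩
  loopless := ⟨fun x ⟨_, h⟩ => (G x.1).loopless.irrefl x.2 h⟩

lemma isContained_disjointUnion (G : ι → SimpleGraph V) (i : ι) : G i ⊑ disjointUnion G :=
  ⟨⟨⟨Prod.mk i, fun h => ⟨rfl, h⟩⟩, Prod.mk_right_injective i⟩⟩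

lemma HasRay.exists_of_disjointUnion {G : ι → SimpleGraph V} (h : HasRay (disjointUnion G)) :
    ∃ i, HasRay (G i) := by
  obtain ⟨r, hr, hadj⟩ := h
  have htag : ∀ n, (r n).1 = (r 0).1 := by
    intro n
    induction n with
    | zero => rfl
    | succ n ih => exact (hadj n).1.symm.trans ih
  refine ⟨(r 0).1, fun n => (r n).2, fun m n h => hr (Prod.ext ((htag m).trans (htag n).symm) h),
    fun n => ?_⟩
  have := (hadj n).2
  rwa [htag n] at this

section PrefixChain

variable {α : Type*} {t : ℕ → List α}

lemma getElem?_eq_of_prefix_chain (hcomp : ∀ n, t n <+: t (n + 1) ∨ t (n + 1) <+: t n)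
    {m p q : ℕ} (hpq : p ≤ q) (hlen : ∀ n, p ≤ n → n ≤ q → m < (t n).length) :
    (t p)[m]? = (t q)[m]? := by
  induction q, hpq using Nat.le_induction with
  | base => rfl
  | succ q hpq ih =>
    rw [ih fun n h₁ h₂ => hlen n h₁ (by omega)]
    rcases hcomp q with h | h
    · rw [List.getElem?_eq_getElem (hlen q hpq (by omega)), List.prefix_iff_getElem?.1 h]
    · rw [List.getElem?_eq_getElem (hlen (q + 1) (by omega) le_rfl),
        List.prefix_iff_getElem?.1 h]

lemma eventually_le_length_of_prefix_chain (hinj : Function.Injective t)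
    (hcomp : ∀ n, t n <+: t (n + 1) ∨ t (n + 1) <+: t n) (m : ℕ) :
    ∀ᶠ n in atTop, m ≤ (t n).length := by
  induction m with
  | zero => exact Eventually.of_forall fun _ => Nat.zero_le _
  | succ m ih =>
    obtain ⟨N, hN⟩ := eventually_atTop.1 ih
    by_contra hcon
    have hfreq : ∃ᶠ n in atTop, (t n).length = m :=
      (not_eventually.1 hcon).and_eventually ih |>.mono fun _ h => by omega
    obtain ⟨p, hNp, hp⟩ := hfreq.forall_exists_of_atTop N
    obtain ⟨q, hpq, hq⟩ := hfreq.forall_exists_of_atTop (p + 1)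
    -- two distinct terms of length `m` with all terms in between of length `≥ m` coincide
    have : t p = t q := List.ext_getElem? fun k => by
      rcases lt_or_ge k m with hk | hk
      · exact getElem?_eq_of_prefix_chain hcomp (by omega) fun n hn _ => by
          have := hN n (by omega); omega
      · rw [List.getElem?_eq_none (by omega), List.getElem?_eq_none (by omega)]
    exact absurd (hinj this) (by omega)

lemma exists_branch_of_prefix_chain (hinj : Function.Injective t)
    (hcomp : ∀ n, t n <+: t (n + 1) ∨ t (n + 1) <+: t n) :
    ∃ g : ℕ → α, ∀ K, ∃ n, (List.range K).map g <+: t n := by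
  have hstable : ∀ m : ℕ, ∃ x : α, ∀ᶠ n in atTop, (t n)[m]? = some x := by
    intro m
    obtain ⟨N, hN⟩ :=
      eventually_atTop.1 (eventually_le_length_of_prefix_chain hinj hcomp (m + 1))
    refine ⟨(t N)[m]'(hN N le_rfl), eventually_atTop.2 ⟨N, fun n hn => ?_⟩⟩
    rw [← getElem?_eq_of_prefix_chain hcomp hn fun k hk _ => hN k hk, List.getElem?_eq_getElem]
  choose g hg using hstable
  refine ⟨g, fun K => ?_⟩
  obtain ⟨n, hn⟩ := ((eventually_all_finset (Finset.range K)).2 fun m _ => hg m).exists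
  refine ⟨n, List.prefix_iff_getElem?.2 fun i hi => ?_⟩
  simp only [List.length_map, List.length_range] at hi
  simpa using hn i (Finset.mem_range.2 hi)

end PrefixChain

section PartialCopies

variable {G : SimpleGraph V} {H : SimpleGraph ℕ}

def IsPartialCopy (G : SimpleGraph V) (H : SimpleGraph ℕ) (l : List V) : Prop :=
  l.Nodup ∧ ∀ a b (ha : a < l.length) (hb : b < l.length), H.Adj a b → G.Adj l[a] l[b]

lemma IsPartialCopy.of_prefix {l₁ l₂ : List V} (h : IsPartialCopy G H l₂) (hl : l₁ <+: l₂) :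
    IsPartialCopy G H l₁ := by
  refine ⟨hl.nodup h.1, fun a b ha hb hab => ?_⟩
  rw [hl.getElem ha, hl.getElem hb]
  exact h.2 a b _ _ hab

lemma isPartialCopy_map_range {g : ℕ → V} {n : ℕ} (hinj : Set.InjOn g (Set.Iio n))
    (h : ∀ b < n, ∀ a < b, H.Adj a b → G.Adj (g a) (g b)) :
    IsPartialCopy G H ((List.range n).map g) := by
  refine ⟨(List.nodup_map_iff_inj_on List.nodup_range).2 fun x hx y hy =>
    hinj (by simpa using hx) (by simpa using hy), fun a b ha hb hab => ?_⟩
  simp only [List.length_map, List.length_range] at ha hb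
  simp only [List.getElem_map, List.getElem_range]
  rcases lt_trichotomy a b with hlt | rfl | hgt
  · exact h b hb a hlt hab
  · exact absurd hab (H.loopless.irrefl a)
  · exact (h a ha b hgt hab.symm).symm

lemma isContained_of_forall_isPartialCopy {g : ℕ → V}
    (h : ∀ n, IsPartialCopy G H ((List.range n).map g)) : H ⊑ G := by
  refine ⟨⟨⟨g, fun {a b} hab => ?_⟩, fun a b hab => ?_⟩⟩
  · have hlen : ∀ k, k ≤ max a b → k < ((List.range (max a b + 1)).map g).length := by
      simp only [List.length_map, List.length_range]
      omega
    simpa using (h (max a b + 1)).2 a b (hlen a (by omega)) (hlen b (by omega)) hab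
  · exact (List.nodup_map_iff_inj_on List.nodup_range).1 (h (max a b + 1)).1 a
      (List.mem_range.2 (by omega)) b (List.mem_range.2 (by omega)) hab

def partialCopyTree (G : SimpleGraph V) (H : SimpleGraph ℕ) : SimpleGraph (List V) :=
  SimpleGraph.fromRel fun l₁ l₂ => l₁ <+: l₂ ∧ H.Adj l₁.length l₂.length ∧ IsPartialCopy G H l₂

lemma partialCopyTree_adj_of_prefix {l₁ l₂ : List V} (hl : l₁ <+: l₂)
    (hH : H.Adj l₁.length l₂.length) (h : IsPartialCopy G H l₂) :
    (partialCopyTree G H).Adj l₁ l₂ :=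
  (SimpleGraph.fromRel_adj _ _ _).2
    ⟨fun he => H.loopless.irrefl _ (he ▸ hH), Or.inl ⟨hl, hH, h⟩⟩

lemma prefix_or_prefix_of_partialCopyTree_adj {l₁ l₂ : List V}
    (h : (partialCopyTree G H).Adj l₁ l₂) : l₁ <+: l₂ ∨ l₂ <+: l₁ :=
  ((SimpleGraph.fromRel_adj _ _ _).1 h).2.imp (·.1) (·.1)

lemma isPartialCopy_of_partialCopyTree_adj {l₁ l₂ : List V}
    (h : (partialCopyTree G H).Adj l₁ l₂) : IsPartialCopy G H l₁ := by
  rcases ((SimpleGraph.fromRel_adj _ _ _).1 h).2 with ⟨hl, -, h₂⟩ | ⟨-, -, h₁⟩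
  exacts [h₂.of_prefix hl, h₁]

theorem isContained_of_hasRay_partialCopyTree (h : HasRay (partialCopyTree G H)) : H ⊑ G := by
  obtain ⟨t, hinj, hadj⟩ := h
  obtain ⟨g, hg⟩ := exists_branch_of_prefix_chain hinj fun n =>
    prefix_or_prefix_of_partialCopyTree_adj (hadj n)
  refine isContained_of_forall_isPartialCopy (g := g) fun K => ?_
  obtain ⟨n, hn⟩ := hg K
  exact (isPartialCopy_of_partialCopyTree_adj (hadj n)).of_prefix hn

theorem isContained_of_partialCopyTree_isContained (h : partialCopyTree G H ⊑ G) : H ⊑ G := by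
  obtain ⟨f⟩ := h
  let l : ℕ → List V := fun n => Nat.rec [] (fun _ l => l ++ [f l]) n
  let g : ℕ → V := fun n => f (l n)
  have hl : ∀ n, l n = (List.range n).map g := by
    intro n
    induction n with
    | zero => rfl
    | succ n ih => rw [List.range_succ, List.map_append, ← ih]; rfl
  have hinj : Function.Injective g := fun a b hab => by
    simpa [hl] using congrArg List.length (f.injective hab)
  have hprefix : ∀ a b, a ≤ b → l a <+: l b := fun a b hab => by
    induction b, hab using Nat.le_induction with
    | base => exact List.prefix_refl _
    | succ b _ ih => exact ih.trans (List.prefix_append _ _)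
  have hstep : ∀ b, IsPartialCopy G H (l b) → ∀ a < b, H.Adj a b → G.Adj (g a) (g b) :=
    fun b hb a hab hH => f.toHom.map_adj <| partialCopyTree_adj_of_prefix (hprefix a b hab.le)
      (by simpa [hl] using hH) hb
  have hadj : ∀ b, ∀ a < b, H.Adj a b → G.Adj (g a) (g b) := by
    intro b
    induction b using Nat.strong_induction_on with
    | _ b ih => exact hstep b (hl b ▸ isPartialCopy_map_range hinj.injOn ih)
  exact isContained_of_forall_isPartialCopy (g := g) fun n =>
    isPartialCopy_map_range hinj.injOn fun b _ => hadj b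

end PartialCopies

lemma Cardinal.mk_prod_list_sum_eq {ι U : Type u} [Infinite U] (h : #ι ≤ #U) :
    #((ι × List U) ⊕ U) = #U := by
  have : #(ι × List U) ≤ #U := by
    rw [mk_prod, lift_id, lift_id, mk_list_eq_mk]
    exact (mul_le_mul' h le_rfl).trans (mul_eq_self (aleph0_le_mk U)).le
  rw [mk_sum, lift_id, lift_id, add_comm]
  exact add_eq_left (aleph0_le_mk U) this

/-- For every nonempty set `Γ` of countable graphs, each containing an infinite path,
and every infinite cardinal `λ`, the weak complexity of `Forb(Γ)` at `λ` is at least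
`λ⁺`: no family of at most `λ` graphs of size `λ` omitting `Γ` weakly embeds all
graphs of size `λ` omitting `Γ`. -/
theorem weak_complexity_ge_succ (Γ : Set (SimpleGraph ℕ)) (hne : Γ.Nonempty)
    (hray : ∀ H ∈ Γ, HasRay H)
    (lam : Cardinal.{0}) (hlam : Cardinal.aleph0 ≤ lam)
    (ι : Type) (hι : Cardinal.mk ι ≤ lam)
    (F : ι → Σ V : Type, SimpleGraph V)
    (hcard : ∀ i, Cardinal.mk (F i).1 = lam)
    (homit : ∀ i, OmitsAll (F i).2 Γ) :
    ∃ (W : Type) (H : SimpleGraph W), Cardinal.mk W = lam ∧ OmitsAll H Γ ∧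
      ∀ i, ¬ HasSubgraphCopy (F i).2 H := by
  obtain ⟨H₀, hH₀⟩ := hne
  have hU : #lam.out = lam := Cardinal.mk_out lam
  have : Infinite lam.out := Cardinal.infinite_iff.2 (hlam.trans hU.ge)
  have e : ∀ i, (F i).1 ≃ lam.out := fun i => (Cardinal.eq.1 ((hcard i).trans hU.symm)).some
  let G i := (F i).2.map (e i)
  have hfree : ∀ i, ¬ H₀ ⊑ G i := fun i h => homit i H₀ hH₀ <|
    hasSubgraphCopy_iff_isContained.2 (h.trans (SimpleGraph.Iso.map (e i) _).symm.isContained)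
  refine ⟨_, disjointUnion (fun i => partialCopyTree (G i) H₀) ⊕g (⊥ : SimpleGraph lam.out),
    (Cardinal.mk_prod_list_sum_eq (hι.trans hU.ge)).trans hU, fun H hH hcopy => ?_,
    fun i hcopy => ?_⟩
  · obtain ⟨i, hi⟩ := ((hray H hH).mono (hasSubgraphCopy_iff_isContained.1 hcopy)).of_sum_bot
      |>.exists_of_disjointUnion
    exact hfree i (isContained_of_hasRay_partialCopyTree hi)
  · refine hfree i (isContained_of_partialCopyTree_isContained ?_)
    exact (isContained_disjointUnion _ i).trans <|
      SimpleGraph.Embedding.sumInl.isContained.trans <|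
      (hasSubgraphCopy_iff_isContained.1 hcopy).trans (SimpleGraph.Iso.map (e i) _).isContained
end

section
/- In the recursive construction G_α (α < λ⁺) where G_α joins a new vertex w_α to the disjoint union of copies of G_β for β < α, every graph G_α contains no infinite path (no ray). -/
private lemma key_no_ray (α : Ordinal) :
    ¬ ∃ f : ℕ → {l : List Ordinal // l.Chain' (· > ·) ∧ l.head? = some α},
      Function.Injective f ∧ ∀ n, (f n).1 ≠ (f (n+1)).1 ∧
        ((f n).1 <+: (f (n+1)).1 ∨ (f (n+1)).1 <+: (f n).1) := by
  induction α using Ordinal.induction with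
  | _ α ih =>
  rintro ⟨f, hinj, hstep⟩
  classical
  -- each list is α :: its tail
  have hcons : ∀ n, (f n).1 = α :: (f n).1.tail := by
    intro n
    have hh := (f n).2.2
    cases h : (f n).1 with
    | nil => rw [h] at hh; simp at hh
    | cons a t =>
      rw [h] at hh
      simp only [List.head?_cons, Option.some.injEq] at hh
      subst hh
      simp
  -- there is at most one n with empty tail
  have huniq : ∀ m n, (f m).1.tail = [] → (f n).1.tail = [] → m = n := by
    intro m n hm hn
    apply hinj
    apply Subtype.ext
    rw [hcons m, hcons n, hm, hn]
  set N : ℕ := if h : ∃ n, (f n).1.tail = [] then h.choose + 1 else 0 with hN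
  have hne : ∀ n, N ≤ n → (f n).1.tail ≠ [] := by
    intro n hn hemp
    by_cases h : ∃ k, (f k).1.tail = []
    · have := huniq n h.choose hemp h.choose_spec
      simp only [hN, dif_pos h] at hn
      omega
    · exact h ⟨n, hemp⟩
  -- head of a nonempty prefix agrees
  have hpref_head : ∀ (s t : List Ordinal), s ≠ [] → s <+: t → s.head? = t.head? := by
    rintro s t hs ⟨r, rfl⟩
    cases s with
    | nil => exact absurd rfl hs
    | cons a u => simp
  -- second entries are constant from N on
  have hsec : ∀ n, N ≤ n → (f n).1.tail.head? = (f N).1.tail.head? := by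
    intro n hn
    induction n with
    | zero => rw [Nat.le_zero.mp hn]
    | succ n ihn =>
      rcases Nat.lt_or_ge N (n+1) with h | h
      · have hn' : N ≤ n := by omega
        rw [← ihn hn']
        have hp := (hstep n).2
        have h1 := hne n hn'
        have h2 := hne (n+1) (by omega)
        rcases hp with hp | hp
        · rw [hcons n, hcons (n+1)] at hp
          rw [List.cons_prefix_cons] at hp
          exact (hpref_head _ _ h1 hp.2).symm
        · rw [hcons n, hcons (n+1)] at hp
          rw [List.cons_prefix_cons] at hp
          exact hpref_head _ _ h2 hp.2
      · have : N = n + 1 := by omega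
        rw [this]
  obtain ⟨β, hβ⟩ : ∃ β, (f N).1.tail.head? = some β := by
    cases h : (f N).1.tail with
    | nil => exact absurd h (hne N le_rfl)
    | cons a u => exact ⟨a, by simp⟩
  have hβα : β < α := by
    have hc := (f N).2.1
    rw [hcons N] at hc
    cases h : (f N).1.tail with
    | nil => exact absurd h (hne N le_rfl)
    | cons a u =>
      rw [h] at hc hβ
      simp at hβ
      subst hβ
      exact (List.isChain_cons_cons.mp hc).1
  refine ih β hβα ⟨fun n => ⟨(f (N+n)).1.tail, ?_, ?_⟩, ?_, ?_⟩
  · have hc := (f (N+n)).2.1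
    exact hc.tail
  · rw [hsec (N+n) (by omega)]; exact hβ
  · intro m n h
    simp only [Subtype.mk.injEq] at h
    have : f (N+m) = f (N+n) := Subtype.ext (by rw [hcons (N+m), hcons (N+n), h])
    have := hinj this
    omega
  · intro n
    have hs := hstep (N+n)
    have harr : N + n + 1 = N + (n + 1) := by omega
    rw [harr] at hs
    constructor
    · intro h
      have h' : (f (N+n)).1.tail = (f (N+(n+1))).1.tail := h
      exact hs.1 (by rw [hcons (N+n), hcons (N+(n+1)), h'])
    · rcases hs.2 with hp | hp
      · left
        rw [hcons (N+n), hcons (N+(n+1)), List.cons_prefix_cons] at hp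
        exact hp.2
      · right
        rw [hcons (N+n), hcons (N+(n+1)), List.cons_prefix_cons] at hp
        exact hp.2

/-- The recursive construction: `G_α` has as vertices the strictly decreasing finite
sequences of ordinals with first entry `α` (a vertex `⟨α, β, γ, …⟩` is the joining
vertex of the copy of `G_γ` inside the copy of `G_β` inside `G_α`, and `⟨α⟩ = w_α`),
with two vertices adjacent iff one is a proper prefix of the other (`w` of each
sub-copy is joined to every vertex of the disjoint union below it).  Every such
graph `G_α` contains no ray (no one-way infinite path). -/
theorem construction_has_no_ray (α : Ordinal)
    (G : SimpleGraph {l : List Ordinal // l.Chain' (· > ·) ∧ l.head? = some α})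
    (hadj : ∀ s t : {l : List Ordinal // l.Chain' (· > ·) ∧ l.head? = some α},
      G.Adj s t ↔ s ≠ t ∧ (s.1 <+: t.1 ∨ t.1 <+: s.1)) :
    ¬ ∃ f : ℕ → {l : List Ordinal // l.Chain' (· > ·) ∧ l.head? = some α},
      Function.Injective f ∧ ∀ n, G.Adj (f n) (f (n + 1)) := by
  rintro ⟨f, hinj, hadjf⟩
  refine key_no_ray α ⟨f, hinj, fun n => ?_⟩
  have h := (hadj _ _).mp (hadjf n)
  exact ⟨fun he => h.1 (Subtype.ext he), h.2⟩
end

section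
/- Suppose G is a graph omitting all configurations in Γ*, i.e., there are no vertices v, u with a ray R ⊆ G[v], u ∈ R, and a ray S ⊆ G[u]. Let r be a function assigning to each vertex v a ray r(v) ⊆ G[v] when one exists and ∅ otherwise. Then for any set A of vertices, the set G₁ := A ∪ ⋃_{v∈A} r(v) spans an r-subgraph of G: for every vertex w of G₁, if G[w] contains a ray then G₁[w] contains a ray. -/
/-- A ray in the neighbourhood of `v`. -/
def NbhdRay {V : Type*} (G : SimpleGraph V) (v : V) (f : ℕ → V) : Prop :=
  Function.Injective f ∧ (∀ n, G.Adj v (f n)) ∧ ∀ n, G.Adj (f n) (f (n + 1))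

/-- `G[v]` contains a ray. -/
def HasNbhdRay {V : Type*} (G : SimpleGraph V) (v : V) : Prop :=
  ∃ f : ℕ → V, NbhdRay G v f

/-- Suppose `G` omits all configurations in `Γ*`: there are no vertices `v, u` with
a ray `R ⊆ G[v]`, `u` on `R`, and a ray `S ⊆ G[u]`.  Let `r` pick a ray `r(v) ⊆ G[v]`
(as a vertex set) whenever one exists and `∅` otherwise.  Then for any vertex set
`A`, the induced subgraph `G₁` on `A ∪ ⋃_{v∈A} r(v)` is an r-subgraph of `G`:
every vertex of `G₁` whose `G`-neighbourhood contains a ray has a ray in its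
`G₁`-neighbourhood. -/
theorem union_of_rays_is_rSubgraph {V : Type*} (G : SimpleGraph V)
    (homit : ¬ ∃ (v u : V) (R S : ℕ → V),
      NbhdRay G v R ∧ (∃ n, R n = u) ∧ NbhdRay G u S)
    (r : V → Set V)
    (hr : ∀ v, (HasNbhdRay G v → ∃ f, NbhdRay G v f ∧ Set.range f = r v) ∧
      (¬ HasNbhdRay G v → r v = ∅))
    (A : Set V) :
    ∀ w ∈ A ∪ (⋃ v ∈ A, r v), HasNbhdRay G w →
      ∃ f, NbhdRay G w f ∧ ∀ n, f n ∈ A ∪ (⋃ v ∈ A, r v) := by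
  intro w hw hwray
  rcases hw with hwA | hwU
  · obtain ⟨f, hf, hrange⟩ := (hr w).1 hwray
    exact ⟨f, hf, fun n => Or.inr (Set.mem_biUnion hwA (hrange ▸ Set.mem_range_self n))⟩
  · exfalso
    obtain ⟨v, hvA, hwrv⟩ := Set.mem_iUnion₂.mp hwU
    by_cases hv : HasNbhdRay G v
    · obtain ⟨R, hR, hrange⟩ := (hr v).1 hv
      obtain ⟨n, hn⟩ := hrange.symm ▸ hwrv
      obtain ⟨S, hS⟩ := hwray
      exact homit ⟨v, w, R, S, hR, ⟨n, hn⟩, hS⟩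
    · simp [(hr v).2 hv] at hwrv
end
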